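/- Let n be a positive integer and s a non-negative integer with n < s+2, and suppose there exists a prime p with (n+s)/2 < p ≤ n. If g₁(x) = g₁(x,n,s) is the product of a polynomial of degree 1 and an irreducible polynomial in ℚ[x], then g₁(x) is irreducible over ℚ. -/

import Mathlib

/-!
The hypotheses `n < s + 2` and `n + s < 2p ≤ 2n` force `s = n - 1` and `p = n`, so the claim is
that `g₁(x, p, p - 1)` is irreducible for every prime `p`. Its coefficients are the integers
`p!/j! · C(2p - 1 - j, p - j)`, which are divisible by `p` for `j < p`, and its constant term is
`p · (p - 1)! · C(2p - 1, p)`, which is not divisible by `p²` because `C(2p - 1, p) ≡ 1 (mod p)` by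
Lucas' theorem. Hence it is Eisenstein at `p`, and Gauss' lemma carries irreducibility over `ℤ`
to `ℚ`.
-/

open Polynomial Finset

/-- g₁(x,n,s) = n!·∑_{j=0}^{n} C(n+s−j, n−j)·x^j/j!, as a polynomial over ℚ. -/
noncomputable def g1 (n s : ℕ) : ℚ[X] :=
  (n.factorial : ℚ[X]) *
    ∑ j ∈ Finset.range (n + 1),
      Polynomial.C (((n + s - j).choose (n - j) : ℚ) / (j.factorial : ℚ)) * Polynomial.X ^ j

open Nat

theorem Nat.choose_add_modEq_one {p k : ℕ} (hp : p.Prime) (hk : k < p) :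
    (p + k).choose p ≡ 1 [MOD p] := by
  have := Fact.mk hp
  simpa [Nat.mod_eq_of_lt hk, Nat.div_eq_of_lt hk, hp.pos, Nat.add_div_left] using
    Choose.choose_modEq_choose_mod_mul_choose_div_nat (n := p + k) (k := p) (p := p)

theorem Nat.Prime.not_sq_dvd_factorial_mul_choose {p : ℕ} (hp : p.Prime) :
    ¬ p ^ 2 ∣ p ! * (p + (p - 1)).choose p := by
  rw [← Nat.mul_factorial_pred hp.ne_zero, sq, mul_assoc]
  intro h
  have hpred : p - 1 < p := Nat.sub_one_lt hp.ne_zero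
  rcases hp.dvd_mul.1 (Nat.dvd_of_mul_dvd_mul_left hp.pos h) with h | h
  · exact hpred.not_ge (hp.dvd_factorial.1 h)
  · exact hp.not_dvd_one (((Nat.choose_add_modEq_one hp hpred).dvd_iff dvd_rfl).1 h)

theorem Nat.dvd_factorial_div_factorial {j n : ℕ} (hj : j < n) : n ∣ n ! / j ! := by
  apply Nat.dvd_div_of_mul_dvd
  rw [mul_comm, ← Nat.mul_factorial_pred (by omega : n ≠ 0)]
  exact Nat.mul_dvd_mul_left n (Nat.factorial_dvd_factorial (by omega))

noncomputable def g1Int (n s : ℕ) : ℤ[X] :=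
  ∑ j ∈ range (n + 1), C ((n ! / j ! * (n + s - j).choose (n - j) : ℕ) : ℤ) * X ^ j

theorem coeff_g1Int (n s k : ℕ) :
    (g1Int n s).coeff k =
      if k ≤ n then ((n ! / k ! * (n + s - k).choose (n - k) : ℕ) : ℤ) else 0 := by
  simp only [g1Int, finsetSum_coeff, coeff_C_mul, coeff_X_pow, mul_ite, mul_one, mul_zero,
    sum_ite_eq, mem_range, Nat.lt_succ_iff]

theorem coeff_g1Int_self (n s : ℕ) : (g1Int n s).coeff n = 1 := by
  simp [coeff_g1Int, Nat.div_self n.factorial_pos]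

theorem natDegree_g1Int_le (n s : ℕ) : (g1Int n s).natDegree ≤ n :=
  natDegree_le_iff_coeff_eq_zero.2 fun k hk => by simp [coeff_g1Int, not_le.2 hk]

theorem natDegree_g1Int (n s : ℕ) : (g1Int n s).natDegree = n :=
  (natDegree_g1Int_le n s).antisymm
    (le_natDegree_of_ne_zero (by rw [coeff_g1Int_self]; exact one_ne_zero))

theorem monic_g1Int (n s : ℕ) : (g1Int n s).Monic :=
  monic_of_natDegree_le_of_coeff_eq_one n (natDegree_g1Int_le n s) (coeff_g1Int_self n s)

theorem map_g1Int (n s : ℕ) : (g1Int n s).map (Int.castRingHom ℚ) = g1 n s := by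
  rw [g1Int, g1, Polynomial.map_sum, mul_sum]
  refine sum_congr rfl fun j hj => ?_
  rw [Polynomial.map_mul, Polynomial.map_pow, map_X, map_C, ← C_eq_natCast, ← mul_assoc, ← C_mul]
  congr 2
  rw [eq_intCast, Int.cast_natCast, Nat.cast_mul, Nat.cast_div
    (Nat.factorial_dvd_factorial (Nat.lt_succ_iff.1 (mem_range.1 hj))) (by positivity)]
  ring

theorem isEisensteinAt_g1Int {p : ℕ} (hp : p.Prime) :
    (g1Int p (p - 1)).IsEisensteinAt (Ideal.span {(p : ℤ)}) := by
  refine (monic_g1Int p (p - 1)).isEisensteinAt_of_mem_of_notMem ?_ (fun {k} hk => ?_) ?_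
  · rw [Ne, Ideal.span_singleton_eq_top]
    exact_mod_cast hp.not_isUnit
  · rw [natDegree_g1Int] at hk
    rw [coeff_g1Int, if_pos hk.le, Ideal.mem_span_singleton]
    exact Int.natCast_dvd_natCast.2 ((Nat.dvd_factorial_div_factorial hk).mul_right _)
  · rw [coeff_g1Int, if_pos p.zero_le, Ideal.span_singleton_pow, Ideal.mem_span_singleton]
    simp only [Nat.factorial_zero, Nat.div_one, Nat.sub_zero]
    exact_mod_cast hp.not_sq_dvd_factorial_mul_choose

theorem irreducible_g1_of_prime {p : ℕ} (hp : p.Prime) : Irreducible (g1 p (p - 1)) := by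
  have hspan : (Ideal.span {(p : ℤ)}).IsPrime :=
    (Ideal.span_singleton_prime (by exact_mod_cast hp.ne_zero)).2 (Nat.prime_iff_prime_int.1 hp)
  have hZ : Irreducible (g1Int p (p - 1)) :=
    (isEisensteinAt_g1Int hp).irreducible hspan (monic_g1Int p (p - 1)).isPrimitive
      (by rw [natDegree_g1Int]; exact hp.pos)
  rw [← map_g1Int]
  exact ((monic_g1Int p (p - 1)).irreducible_iff_irreducible_map_fraction_map (K := ℚ)).1 hZ

theorem g1_irreducible_of_prime_in_range_general (n s : ℕ) (hns : n < s + 2)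
    (hprime : ∃ p : ℕ, p.Prime ∧ ((n : ℚ) + (s : ℚ)) / 2 < (p : ℚ) ∧ p ≤ n) :
    Irreducible (g1 n s) := by
  obtain ⟨p, hp, hp_gt, hp_le⟩ := hprime
  have hsum : n + s < 2 * p := by
    qify
    linarith
  obtain rfl : n = p := by omega
  obtain rfl : s = n - 1 := by omega
  exact irreducible_g1_of_prime hp

theorem g1_irreducible_of_prime_in_range (n s : ℕ) (hn : 1 ≤ n) (hns : n < s + 2)
    (hprime : ∃ p : ℕ, p.Prime ∧ ((n : ℚ) + (s : ℚ)) / 2 < (p : ℚ) ∧ p ≤ n)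
    (hfac : ∃ l q : ℚ[X], l.natDegree = 1 ∧ Irreducible q ∧ g1 n s = l * q) :
    Irreducible (g1 n s) :=
  g1_irreducible_of_prime_in_range_general n s hns hprime
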